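/- arXiv:1903.02287 — 2 statements merged into one kernel-verified Lean document; each statement's English description precedes it below -/
import Mathlib

section
/- Let R be a finite commutative ring that is not reduced (has a nonzero nilpotent). Then any two distinct vertices of the nil clean divisor graph G_N(R) are at distance at most 2: either they are adjacent or they have a common neighbor. -/
/-! A nonzero nilpotent `n` is adjacent to every other vertex of `G_N(R)`: each product `x * n` is
nilpotent, hence nil clean with idempotent part `0`. So any two distinct vertices are adjacent
when one of them is `n`, and have `n` as a common neighbour otherwise. -/

def IsNilCleanElem {R : Type*} [CommRing R] (x : R) : Prop :=
  ∃ e n : R, IsIdempotentElem e ∧ IsNilpotent n ∧ x = e + n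

def NCVertex {R : Type*} [CommRing R] (x : R) : Prop :=
  x ≠ 0 ∧ ∃ y : R, y ≠ 0 ∧ y ≠ x ∧ IsNilCleanElem (x * y)

def NCAdj {R : Type*} [CommRing R] (x y : R) : Prop :=
  x ≠ y ∧ NCVertex x ∧ NCVertex y ∧ IsNilCleanElem (x * y)

section NilClean

variable {R : Type*} [CommRing R] {n : R}

lemma IsNilpotent.isNilCleanElem (hn : IsNilpotent n) : IsNilCleanElem n :=
  ⟨0, n, IsIdempotentElem.zero, hn, (zero_add n).symm⟩

lemma IsNilpotent.isNilCleanElem_mul_left (hn : IsNilpotent n) (x : R) :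
    IsNilCleanElem (x * n) :=
  (Commute.all x n).isNilpotent_mul_left hn |>.isNilCleanElem

lemma IsNilpotent.isNilCleanElem_mul_right (hn : IsNilpotent n) (x : R) :
    IsNilCleanElem (n * x) :=
  mul_comm x n ▸ hn.isNilCleanElem_mul_left x

lemma IsNilpotent.ncVertex (hn : IsNilpotent n) (hn0 : n ≠ 0) : NCVertex n := by
  have : Nontrivial R := nontrivial_of_ne n 0 hn0
  refine ⟨hn0, 1, one_ne_zero, ?_, hn.isNilCleanElem_mul_right 1⟩
  rintro rfl
  exact not_isNilpotent_one hn

lemma IsNilpotent.ncAdj_left (hn : IsNilpotent n) (hn0 : n ≠ 0) {x : R} (hx : NCVertex x)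
    (hxn : x ≠ n) : NCAdj x n :=
  ⟨hxn, hx, hn.ncVertex hn0, hn.isNilCleanElem_mul_left x⟩

lemma IsNilpotent.ncAdj_right (hn : IsNilpotent n) (hn0 : n ≠ 0) {x : R} (hx : NCVertex x)
    (hxn : x ≠ n) : NCAdj n x :=
  ⟨hxn.symm, hn.ncVertex hn0, hx, hn.isNilCleanElem_mul_right x⟩

end NilClean

theorem stmt8_general {R : Type*} [CommRing R]
    (hnr : ∃ n : R, n ≠ 0 ∧ IsNilpotent n) :
    ∀ x y : R, NCVertex x → NCVertex y → x ≠ y →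
      (NCAdj x y ∨ ∃ a : R, NCAdj x a ∧ NCAdj a y) := by
  obtain ⟨n, hn0, hn⟩ := hnr
  intro x y hx hy hxy
  by_cases hxn : x = n
  · subst hxn
    exact Or.inl (hn.ncAdj_right hn0 hy (Ne.symm hxy))
  by_cases hyn : y = n
  · subst hyn
    exact Or.inl (hn.ncAdj_left hn0 hx hxy)
  exact Or.inr ⟨n, hn.ncAdj_left hn0 hx hxn, hn.ncAdj_right hn0 hy hyn⟩

theorem stmt8 {R : Type*} [CommRing R] [Fintype R] [Nontrivial R]
    (hnr : ∃ n : R, n ≠ 0 ∧ IsNilpotent n) :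
    ∀ x y : R, NCVertex x → NCVertex y → x ≠ y →
      (NCAdj x y ∨ ∃ a : R, NCAdj x a ∧ NCAdj a y) :=
  stmt8_general hnr
end

section
/- For p an odd prime, the nil clean divisor graph of ℤ/(2p) has {p} as a dominating set: every vertex other than p is adjacent to p. Moreover no single other vertex dominates the graph when p > 3, so {p} is the unique smallest dominating set. -/
def IsNCDominatingVertex {R : Type*} [CommRing R] (v : R) : Prop :=
  ∀ x : R, NCVertex x → x ≠ v → NCAdj x v

section Transport

variable {R S : Type*} [CommRing R] [CommRing S]

theorem IsNilCleanElem.map {F : Type*} [FunLike F R S] [RingHomClass F R S] (f : F) {x : R}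
    (h : IsNilCleanElem x) : IsNilCleanElem (f x) := by
  obtain ⟨e, n, he, hn, rfl⟩ := h
  exact ⟨f e, f n, he.map f, hn.map f, map_add f e n⟩

theorem isNilCleanElem_iff_isIdempotentElem [IsReduced R] {x : R} :
    IsNilCleanElem x ↔ IsIdempotentElem x := by
  constructor
  · rintro ⟨e, n, he, hn, rfl⟩
    rwa [hn.eq_zero, add_zero]
  · exact fun hx => ⟨x, 0, hx, IsNilpotent.zero, (add_zero x).symm⟩

namespace RingEquiv

variable (e : R ≃+* S)

theorem isNilCleanElem_apply_iff {x : R} : IsNilCleanElem (e x) ↔ IsNilCleanElem x :=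
  ⟨fun h => by simpa using h.map e.symm, fun h => h.map e⟩

theorem ncVertex_apply_iff {x : R} : NCVertex (e x) ↔ NCVertex x := by
  simp only [NCVertex, e.surjective.exists, ← map_mul, e.isNilCleanElem_apply_iff, ne_eq,
    map_eq_zero_iff e e.injective, e.injective.eq_iff]

theorem ncAdj_apply_iff {x y : R} : NCAdj (e x) (e y) ↔ NCAdj x y := by
  simp only [NCAdj, ← map_mul, e.isNilCleanElem_apply_iff, e.ncVertex_apply_iff, ne_eq,
    e.injective.eq_iff]

theorem isNCDominatingVertex_apply_iff {v : R} :
    IsNCDominatingVertex (e v) ↔ IsNCDominatingVertex v := by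
  simp only [IsNCDominatingVertex, e.surjective.forall, e.ncVertex_apply_iff, e.ncAdj_apply_iff,
    ne_eq, e.injective.eq_iff]

end RingEquiv

end Transport

section ZModTwoProd

variable {F : Type*} [Field F]

theorem isNilCleanElem_zmodTwo_prod_iff {x : ZMod 2 × F} :
    IsNilCleanElem x ↔ x.2 = 0 ∨ x.2 = 1 := by
  have h₁ : IsIdempotentElem x.1 := by
    rw [isIdempotentElem_iff, ← sq]
    exact ZMod.pow_card x.1
  rw [isNilCleanElem_iff_isIdempotentElem, ← IsIdempotentElem.iff_eq_zero_or_one,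
    isIdempotentElem_iff, isIdempotentElem_iff, Prod.ext_iff]
  exact and_iff_right h₁

theorem ncVertex_zmodTwo_prod_iff {x : ZMod 2 × F} : NCVertex x ↔ x ≠ 0 := by
  refine ⟨And.left, fun hx => ⟨hx, ?_⟩⟩
  by_cases hx₁ : x = (1, 0)
  · refine ⟨1, one_ne_zero, fun h => ?_, ?_⟩
    · simpa [hx₁] using congrArg Prod.snd h
    · simp [hx₁, isNilCleanElem_zmodTwo_prod_iff]
  · exact ⟨(1, 0), by simp, Ne.symm hx₁, by simp [isNilCleanElem_zmodTwo_prod_iff]⟩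

theorem isNCDominatingVertex_one_zero : IsNCDominatingVertex ((1, 0) : ZMod 2 × F) :=
  fun x hx hx₁ => ⟨hx₁, hx, ncVertex_zmodTwo_prod_iff.2 (by simp),
    by simp [isNilCleanElem_zmodTwo_prod_iff]⟩

theorem snd_ne_zero_of_ne_one_zero {q : ZMod 2 × F} (hq₀ : q ≠ 0) (hq₁ : q ≠ (1, 0)) :
    q.2 ≠ 0 := by
  obtain ⟨a, b⟩ := q
  rintro (rfl : b = 0)
  fin_cases a
  exacts [hq₀ rfl, hq₁ rfl]

theorem not_isNCDominatingVertex (h₂ : (2 : F) ≠ 0) {q : ZMod 2 × F} (hq₀ : q ≠ 0)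
    (hq₁ : q ≠ (1, 0)) : ¬ IsNCDominatingVertex q := by
  have hq₂ := snd_ne_zero_of_ne_one_zero hq₀ hq₁
  set x : ZMod 2 × F := (q.1 + 1, 2 * q.2⁻¹)
  have hx₀ : x ≠ 0 := fun h => by simpa [x, h₂, hq₂] using congrArg Prod.snd h
  have hxq : x ≠ q := fun h => by simpa [x] using congrArg Prod.fst h
  have hxq₂ : (x * q).2 = 2 := by simp [x, mul_assoc, inv_mul_cancel₀ hq₂]
  intro hq
  have hxq_nc := (hq x (ncVertex_zmodTwo_prod_iff.2 hx₀) hxq).2.2.2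
  rw [isNilCleanElem_zmodTwo_prod_iff, hxq₂] at hxq_nc
  rcases hxq_nc with h | h
  · exact h₂ h
  · exact one_ne_zero (by linear_combination h : (1 : F) = 0)

end ZModTwoProd

theorem stmt15_general (p : ℕ) (hp : p.Prime) (hodd : Odd p) :
    (∀ x : ZMod (2 * p), NCVertex x → x ≠ (p : ZMod (2 * p)) →
      NCAdj x (p : ZMod (2 * p))) ∧
    (∀ q : ZMod (2 * p), NCVertex q → q ≠ (p : ZMod (2 * p)) →
      ∃ x : ZMod (2 * p), NCVertex x ∧ x ≠ q ∧ ¬ NCAdj x q) := by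
  have := Fact.mk hp
  have hp₂ : p ≠ 2 := by
    rintro rfl
    exact Nat.not_even_iff_odd.2 hodd even_two
  have hcop : Nat.Coprime 2 p := (Nat.coprime_primes Nat.prime_two hp).2 hp₂.symm
  let e := ZMod.chineseRemainder hcop
  have hep : e p = (1, 0) := by
    simp [Prod.ext_iff, hodd.natCast_zmod_two]
  have h₂ : (2 : ZMod p) ≠ 0 := Ring.two_ne_zero (by rwa [ZMod.ringChar_zmod_n])
  refine ⟨e.isNCDominatingVertex_apply_iff.1 (hep ▸ isNCDominatingVertex_one_zero),
    fun q hq hqp => ?_⟩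
  have hq' := not_isNCDominatingVertex h₂ (q := e q) (by simpa using hq.1)
    (by rwa [← hep, e.injective.ne_iff])
  rw [e.isNCDominatingVertex_apply_iff] at hq'
  simpa [IsNCDominatingVertex] using hq'

theorem stmt15 (p : ℕ) (hp : p.Prime) (hodd : Odd p) (hp3 : 3 < p) :
    (∀ x : ZMod (2 * p), NCVertex x → x ≠ (p : ZMod (2 * p)) →
      NCAdj x (p : ZMod (2 * p))) ∧
    (∀ q : ZMod (2 * p), NCVertex q → q ≠ (p : ZMod (2 * p)) →
      ∃ x : ZMod (2 * p), NCVertex x ∧ x ≠ q ∧ ¬ NCAdj x q) :=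
  stmt15_general p hp hodd
end
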